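/- Let K be a nonarchimedean valued field of mixed characteristic (0,p). Let c ∈ O_K and let H, N, M be positive integers. Let S ⊂ ℚ be the set of rational numbers a/b with |a|, |b| ≤ H (usual archimedean absolute value), viewed inside K. Then the number of distinct values of rv_{Mp^N}(x - c) as x ranges over S \ {c} is at most 2·M·p^{N+1}·(1 + 2·log_p H). Equivalently, the rational numbers of height at most H are contained in at most 2·M·p^{N+1}·(1 + 2·log_p H) balls Mp^N-next to c. -/

import Mathlib

open Finset

section aux
variable {K : Type*} [NormedField K]

lemma ultra_sub (hna : ∀ x y : K, ‖x + y‖ ≤ max ‖x‖ ‖y‖) (x y : K) :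
    ‖x - y‖ ≤ max ‖x‖ ‖y‖ := by
  simpa [sub_eq_add_neg] using hna x (-y)

lemma nat_norm_le_one (hna : ∀ x y : K, ‖x + y‖ ≤ max ‖x‖ ‖y‖) (n : ℕ) : ‖(n : K)‖ ≤ 1 := by
  induction n with
  | zero => simp
  | succ k ih =>
    push_cast
    refine le_trans (hna k 1) ?_
    simp [ih]

lemma int_norm_le_one (hna : ∀ x y : K, ‖x + y‖ ≤ max ‖x‖ ‖y‖) (z : ℤ) : ‖(z : K)‖ ≤ 1 := by
  obtain ⟨n, rfl | rfl⟩ := z.eq_nat_or_neg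
  · exact_mod_cast nat_norm_le_one hna n
  · push_cast
    rw [norm_neg]
    exact nat_norm_le_one hna n

lemma coprime_norm_one (hna : ∀ x y : K, ‖x + y‖ ≤ max ‖x‖ ‖y‖)
    {p : ℕ} (hp : p.Prime) (hpv : ‖(p : K)‖ < 1) {m : ℤ} (hm : ¬ (p : ℤ) ∣ m) :
    ‖(m : K)‖ = 1 := by
  have hcop : IsCoprime ((p : ℤ)) m :=
    (Nat.prime_iff_prime_int.mp hp).irreducible.coprime_iff_not_dvd.mpr hm
  obtain ⟨u, v, huv⟩ := hcop
  have h1 : (1 : K) = (u : K) * (p : K) + (v : K) * (m : K) := by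
    have := congrArg (fun z : ℤ => (z : K)) huv
    push_cast at this
    simpa using this.symm
  have hle : (1 : ℝ) ≤ max ‖(u : K) * (p : K)‖ ‖(v : K) * (m : K)‖ := by
    calc (1:ℝ) = ‖(1:K)‖ := by simp
    _ = ‖(u : K) * (p : K) + (v : K) * (m : K)‖ := by rw [← h1]
    _ ≤ _ := hna _ _
  have hup : ‖(u : K) * (p : K)‖ < 1 := by
    rw [norm_mul]
    calc ‖(u:K)‖ * ‖(p:K)‖ ≤ 1 * ‖(p:K)‖ := by
          apply mul_le_mul_of_nonneg_right (int_norm_le_one hna u) (norm_nonneg _)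
    _ < 1 := by simpa using hpv
  have hvm : (1:ℝ) ≤ ‖(v : K) * (m : K)‖ := by
    rcases max_cases ‖(u : K) * (p : K)‖ ‖(v : K) * (m : K)‖ with ⟨h, _⟩ | ⟨h, _⟩
    · rw [h] at hle; linarith
    · rwa [h] at hle
  have : (1:ℝ) ≤ ‖(m : K)‖ := by
    rw [norm_mul] at hvm
    by_contra hlt
    push_neg at hlt
    nlinarith [norm_nonneg ((v:K)), norm_nonneg ((m:K)), int_norm_le_one hna v]
  exact le_antisymm (int_norm_le_one hna m) this

end aux
section aux2
variable {K : Type*} [NormedField K] [CharZero K]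

lemma nat_norm_eq (hna : ∀ x y : K, ‖x + y‖ ≤ max ‖x‖ ‖y‖) {p : ℕ} (hp : p.Prime)
    (hpv : ‖(p : K)‖ < 1) (n : ℕ) (hn : n ≠ 0) :
    ‖(n : K)‖ = ‖(p : K)‖ ^ (padicValNat p n) := by
  have key : (n : K) = (p : K) ^ (n.factorization p) * ((n / p ^ n.factorization p : ℕ) : K) := by
    rw [← Nat.cast_pow, ← Nat.cast_mul, Nat.ordProj_mul_ordCompl_eq_self]
  have hnd : ¬ (p:ℤ) ∣ ((n / p ^ n.factorization p : ℕ) : ℤ) := by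
    rw [Int.natCast_dvd_natCast]
    exact Nat.not_dvd_ordCompl hp hn
  have hone : ‖((n / p ^ n.factorization p : ℕ) : K)‖ = 1 := by
    have := coprime_norm_one hna hp hpv hnd
    rwa [Int.cast_natCast] at this
  rw [key, norm_mul, norm_pow, hone, mul_one, Nat.factorization_def n hp]

lemma int_norm_eq (hna : ∀ x y : K, ‖x + y‖ ≤ max ‖x‖ ‖y‖) {p : ℕ} (hp : p.Prime)
    (hpv : ‖(p : K)‖ < 1) (z : ℤ) (hz : z ≠ 0) :
    ‖(z : K)‖ = ‖(p : K)‖ ^ (padicValInt p z) := by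
  have habs : ‖(z : K)‖ = ‖((z.natAbs : ℕ) : K)‖ := by
    rcases z.eq_nat_or_neg with ⟨n, rfl | rfl⟩ <;> simp
  rw [habs, nat_norm_eq hna hp hpv z.natAbs (by simpa using hz)]
  rfl

lemma rat_norm_eq (hna : ∀ x y : K, ‖x + y‖ ≤ max ‖x‖ ‖y‖) {p : ℕ} (hp : p.Prime)
    (hpv : ‖(p : K)‖ < 1) (q : ℚ) (hq : q ≠ 0) :
    ‖(q : K)‖ = ‖(p : K)‖ ^ (padicValRat p q) := by
  have hπ0 : ‖(p : K)‖ ≠ 0 := by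
    simp [Nat.cast_ne_zero.mpr hp.ne_zero]
  rw [Rat.cast_def, norm_div]
  rw [int_norm_eq hna hp hpv q.num (Rat.num_ne_zero.mpr hq),
    nat_norm_eq hna hp hpv q.den q.den_nz]
  rw [show padicValRat p q = (padicValInt p q.num : ℤ) - (padicValNat p q.den : ℤ) from rfl]
  rw [zpow_sub₀ hπ0]
  norm_num
end aux2
set_option linter.unusedSectionVars false

lemma val_int_le_logb {p X : ℕ} (hp : p.Prime) (hX : 0 < X) {z : ℤ} (hz : z ≠ 0)
    (h : |z| ≤ (X : ℤ)) : (padicValInt p z : ℝ) ≤ Real.logb p X := by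
  haveI : Fact p.Prime := ⟨hp⟩
  have hdvd : (p : ℤ) ^ padicValInt p z ∣ z := padicValInt_dvd z
  have hle : (p : ℤ) ^ padicValInt p z ≤ |z| :=
    Int.le_of_dvd (abs_pos.mpr hz) ((dvd_abs _ _).mpr hdvd)
  have hle2 : (p : ℝ) ^ padicValInt p z ≤ (X : ℝ) := by
    have := hle.trans h
    exact_mod_cast this
  have hb : (1 : ℝ) < p := by exact_mod_cast hp.one_lt
  calc (padicValInt p z : ℝ) = Real.logb p ((p:ℝ) ^ padicValInt p z) := by
        rw [Real.logb_pow, Real.logb_self_eq_one hb]; ring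
  _ ≤ Real.logb p X := by
      apply (Real.logb_le_logb hb (by positivity) (by exact_mod_cast hX)).mpr hle2

lemma exists_greedy {α : Type*} [DecidableEq α] (S : Finset α) (rel : α → α → Prop)
    [DecidableRel rel] (hrefl : ∀ a ∈ S, rel a a) (hsym : ∀ a ∈ S, ∀ b ∈ S, rel a b → rel b a) :
    ∃ R ⊆ S, (∀ q ∈ S, ∃ s ∈ R, rel q s) ∧ (∀ s ∈ R, ∀ s' ∈ R, s ≠ s' → ¬ rel s s') := by
  obtain ⟨R, hR, hmax⟩ := Finset.exists_max_image
    ((S.powerset).filter (fun R => ∀ s ∈ R, ∀ s' ∈ R, s ≠ s' → ¬ rel s s')) Finset.card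
    ⟨∅, by simp⟩
  rw [Finset.mem_filter, Finset.mem_powerset] at hR
  refine ⟨R, hR.1, ?_, hR.2⟩
  intro q hq
  by_contra hcov
  push_neg at hcov
  have hqR : q ∉ R := fun h => hcov q h (hrefl q hq)
  have hmem : insert q R ∈
      (S.powerset).filter (fun R => ∀ s ∈ R, ∀ s' ∈ R, s ≠ s' → ¬ rel s s') := by
    rw [Finset.mem_filter, Finset.mem_powerset]
    refine ⟨Finset.insert_subset hq hR.1, ?_⟩
    intro s hs s' hs' hne
    rcases Finset.mem_insert.mp hs with rfl | hs2 <;>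
      rcases Finset.mem_insert.mp hs' with rfl | hs'2
    · exact absurd rfl hne
    · exact hcov s' hs'2
    · intro hrel; exact hcov s hs2 (hsym _ (hR.1 hs2) _ hq hrel)
    · exact hR.2 s hs2 s' hs'2 hne
  have := hmax _ hmem
  rw [Finset.card_insert_of_notMem hqR] at this
  omega

lemma int_pigeon {p : ℕ} (hp : p.Prime) (L W : ℕ) (G : Finset ℤ)
    (hG : ∀ a ∈ G, ∀ b ∈ G, a ≠ b →
      ((p : ℤ) ^ W ∣ (a - b) ∧ ¬ (p : ℤ) ^ (W + L) ∣ (a - b))) :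
    G.card ≤ p ^ L := by
  classical
  rcases G.eq_empty_or_nonempty with rfl | ⟨a₀, ha₀⟩
  · simp
  haveI : NeZero (p ^ L) := ⟨pow_ne_zero _ hp.ne_zero⟩
  have hpne : ((p : ℤ) ^ W) ≠ 0 := pow_ne_zero _ (by exact_mod_cast hp.ne_zero)
  set f : ℤ → ZMod (p ^ L) := fun a => (((a - a₀) / (p : ℤ) ^ W : ℤ) : ZMod (p ^ L)) with hf
  have hdvd : ∀ a ∈ G, (p : ℤ) ^ W ∣ (a - a₀) := by
    intro a ha
    rcases eq_or_ne a a₀ with rfl | hne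
    · simp
    · exact (hG a ha a₀ ha₀ hne).1
  have hinj : Set.InjOn f G := by
    intro a ha b hb hfab
    by_contra hne
    obtain ⟨u, hu⟩ := hdvd a ha
    obtain ⟨v, hv⟩ := hdvd b hb
    have hua : (a - a₀) / (p : ℤ) ^ W = u := by rw [hu, Int.mul_ediv_cancel_left _ hpne]
    have hvb : (b - a₀) / (p : ℤ) ^ W = v := by rw [hv, Int.mul_ediv_cancel_left _ hpne]
    rw [hf] at hfab
    simp only [hua, hvb] at hfab
    have : ((u - v : ℤ) : ZMod (p ^ L)) = 0 := by push_cast [hfab]; ring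
    rw [ZMod.intCast_zmod_eq_zero_iff_dvd] at this
    obtain ⟨k, hk⟩ := this
    have habk : a - b = (p : ℤ) ^ (W + L) * k := by
      have : a - b = (a - a₀) - (b - a₀) := by ring
      rw [this, hu, hv, ← mul_sub, hk]
      push_cast
      ring
    exact (hG a ha b hb hne).2 ⟨k, habk⟩
  calc G.card ≤ (Finset.univ : Finset (ZMod (p ^ L))).card :=
        Finset.card_le_card_of_injOn f (fun a _ => Finset.mem_univ _) hinj
  _ = p ^ L := by rw [Finset.card_univ, ZMod.card]

set_option maxHeartbeats 2000000 in
/-- The rational numbers of height at most `H` occupy at most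
`2·M·p^(N+1)·(1 + 2·log_p H)` balls `Mp^N`-next to a point `c ∈ O_K`:
there is a set `R` of at most that many rational representatives such that
every rational of height at most `H` (other than `c`) lies in the same ball
`Mp^N`-next to `c` as some element of `R`. -/
theorem stmt_1 {K : Type*} [NormedField K] [CharZero K]
    (hna : ∀ x y : K, ‖x + y‖ ≤ max ‖x‖ ‖y‖)
    (p : ℕ) (hp : p.Prime) (hpv : ‖(p : K)‖ < 1)
    (c : K) (hc : ‖c‖ ≤ 1) (H N M : ℕ) (hH : 0 < H) (hN : 0 < N) (hM : 0 < M) :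
    ∃ R : Finset ℚ,
      (∀ q ∈ R, ∃ a b : ℤ, |a| ≤ (H : ℤ) ∧ |b| ≤ (H : ℤ) ∧ b ≠ 0 ∧ q = (a : ℚ) / b) ∧
      (R.card : ℝ) ≤ 2 * M * p ^ (N + 1) * (1 + 2 * Real.logb p H) ∧
      ∀ q : ℚ, (∃ a b : ℤ, |a| ≤ (H : ℤ) ∧ |b| ≤ (H : ℤ) ∧ b ≠ 0 ∧ q = (a : ℚ) / b) →
        (q : K) ≠ c →
        ∃ s ∈ R, ‖(q : K) - (s : K)‖ < ‖((M * p ^ N : ℕ) : K)‖ * ‖(q : K) - c‖ := by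
  classical
  haveI : Fact p.Prime := ⟨hp⟩
  have hb1 : (1 : ℝ) < p := by exact_mod_cast hp.one_lt
  have hpK : (p : K) ≠ 0 := Nat.cast_ne_zero.mpr hp.ne_zero
  set π : ℝ := ‖(p : K)‖ with hπdef
  have hπ0 : 0 < π := norm_pos_iff.mpr hpK
  have hπ1 : π < 1 := hpv
  set t : ℝ := Real.logb p H with htdef
  have ht0 : 0 ≤ t := Real.logb_nonneg hb1 (by exact_mod_cast hH)
  set D : ℕ := M * p ^ N with hDdef
  set μ : ℕ := padicValNat p M with hμdef
  set N' : ℕ := N + μ with hN'def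
  -- norm of D
  have hMnorm : ‖(M : K)‖ = π ^ μ := nat_norm_eq hna hp hpv M hM.ne'
  have hDnorm : ‖(D : K)‖ = π ^ N' := by
    have : ((D : ℕ) : K) = (M : K) * (p : K) ^ N := by rw [hDdef]; push_cast; ring
    rw [this, norm_mul, norm_pow, hMnorm, hN'def, ← hπdef, ← pow_add, Nat.add_comm]
  have hDle1 : ‖(D : K)‖ ≤ 1 := by
    have := nat_norm_le_one hna D
    exact this
  have hDpos : 0 < ‖(D : K)‖ := by rw [hDnorm]; positivity
  -- the height predicate
  set Ht : ℚ → Prop :=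
    fun q => ∃ a b : ℤ, |a| ≤ (H : ℤ) ∧ |b| ≤ (H : ℤ) ∧ b ≠ 0 ∧ q = (a : ℚ) / b with hHtdef
  -- valuation lemmas
  have hval_low : ∀ q : ℚ, Ht q → q ≠ 0 → -t ≤ (padicValRat p q : ℝ) := by
    intro q ⟨a, b, ha, hb, hb0, hq⟩ hq0
    have ha0 : a ≠ 0 := by
      rintro rfl; apply hq0; rw [hq]; simp
    have hveq : padicValRat p q = padicValInt p a - padicValInt p b := by
      rw [hq, padicValRat.div (by exact_mod_cast ha0) (by exact_mod_cast hb0)]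
      rw [padicValRat.of_int, padicValRat.of_int]
    have h1 : (padicValInt p b : ℝ) ≤ t := val_int_le_logb hp hH hb0 hb
    have h2 : (0 : ℝ) ≤ (padicValInt p a : ℝ) := by positivity
    rw [hveq]
    push_cast
    linarith
  have hval_diff : ∀ q q' : ℚ, Ht q → Ht q' → q ≠ q' →
      (padicValRat p (q - q') : ℝ) ≤ 2 * t + 1 := by
    intro q q' ⟨a, b, ha, hb, hb0, hq⟩ ⟨a', b', ha', hb', hb'0, hq'⟩ hne
    have hbq : ((b : ℚ)) ≠ 0 := by exact_mod_cast hb0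
    have hb'q : ((b' : ℚ)) ≠ 0 := by exact_mod_cast hb'0
    have hsub : q - q' = ((a * b' - b * a' : ℤ) : ℚ) / ((b * b' : ℤ) : ℚ) := by
      rw [hq, hq', div_sub_div _ _ hbq hb'q]
      push_cast
      ring_nf
    have hnum0 : (a * b' - b * a' : ℤ) ≠ 0 := by
      intro h0
      apply hne
      rw [hq, hq', div_eq_div_iff hbq hb'q]
      have := congrArg (fun z : ℤ => (z : ℚ)) h0
      push_cast at this
      linarith
    have hden0 : (b * b' : ℤ) ≠ 0 := mul_ne_zero hb0 hb'0
    have hveq : padicValRat p (q - q') =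
        padicValInt p (a * b' - b * a') - padicValInt p (b * b') := by
      rw [hsub, padicValRat.div (by exact_mod_cast hnum0) (by exact_mod_cast hden0),
        padicValRat.of_int, padicValRat.of_int]
    have habs : |a * b' - b * a'| ≤ ((2 * H ^ 2 : ℕ) : ℤ) := by
      have h1 : |a * b' - b * a'| ≤ |a * b'| + |b * a'| := abs_sub _ _
      have h2 : |a * b'| ≤ (H : ℤ) * H := by
        rw [abs_mul]
        exact mul_le_mul ha hb' (abs_nonneg _) (by positivity)
      have h3 : |b * a'| ≤ (H : ℤ) * H := by
        rw [abs_mul]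
        exact mul_le_mul hb ha' (abs_nonneg _) (by positivity)
      push_cast
      nlinarith
    have hnum_le : (padicValInt p (a * b' - b * a') : ℝ) ≤ Real.logb p ((2 * H ^ 2 : ℕ)) :=
      val_int_le_logb hp (by positivity) hnum0 habs
    have hlogle : Real.logb p ((2 * H ^ 2 : ℕ) : ℝ) ≤ 2 * t + 1 := by
      have hcast : ((2 * H ^ 2 : ℕ) : ℝ) = 2 * (H : ℝ) ^ 2 := by push_cast; ring
      have hHp : (0 : ℝ) < (H : ℝ) := by exact_mod_cast hH
      have hmono : Real.logb p ((2 * H ^ 2 : ℕ) : ℝ) ≤ Real.logb p ((p : ℝ) * (H : ℝ) ^ 2) := by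
        apply (Real.logb_le_logb hb1 (by rw [hcast]; positivity) (by positivity)).mpr
        rw [hcast]
        have h2p : (2 : ℝ) ≤ p := by exact_mod_cast hp.two_le
        nlinarith
      have heqv : Real.logb p ((p : ℝ) * (H : ℝ) ^ 2) = 1 + 2 * t := by
        rw [Real.logb_mul (by positivity) (by positivity), Real.logb_self_eq_one hb1,
          Real.logb_pow]
        push_cast
        ring
      linarith
    have hden_ge : (0 : ℝ) ≤ (padicValInt p (b * b') : ℝ) := by positivity
    rw [hveq]
    push_cast
    linarith
  have hnormdiff : ∀ q q' : ℚ, q ≠ q' →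
      ‖(q : K) - (q' : K)‖ = π ^ (padicValRat p (q - q')) := by
    intro q q' hne
    have : (q : K) - (q' : K) = ((q - q' : ℚ) : K) := by push_cast; ring
    rw [this, rat_norm_eq hna hp hpv _ (sub_ne_zero.mpr hne)]
  -- the finite set of rationals of height ≤ H, different from c
  set S₀ : Finset ℚ :=
    ((Finset.Icc (-(H : ℤ)) (H : ℤ)) ×ˢ ((Finset.Icc (-(H : ℤ)) (H : ℤ)).erase 0)).image
      (fun ab => (ab.1 : ℚ) / (ab.2 : ℚ)) with hS₀def
  have hS₀1 : ∀ q ∈ S₀, Ht q := by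
    intro q hq
    obtain ⟨⟨a, b⟩, hab, rfl⟩ := Finset.mem_image.mp hq
    rw [Finset.mem_product] at hab
    obtain ⟨hA, hB⟩ := hab
    rw [Finset.mem_Icc] at hA
    rw [Finset.mem_erase, Finset.mem_Icc] at hB
    exact ⟨a, b, abs_le.mpr ⟨hA.1, hA.2⟩, abs_le.mpr ⟨hB.2.1, hB.2.2⟩, hB.1, rfl⟩
  have hS₀2 : ∀ q : ℚ, Ht q → q ∈ S₀ := by
    intro q ⟨a, b, ha, hb, hb0, hq⟩
    apply Finset.mem_image.mpr
    refine ⟨⟨a, b⟩, ?_, hq.symm⟩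
    rw [Finset.mem_product, Finset.mem_Icc, Finset.mem_erase, Finset.mem_Icc]
    rw [abs_le] at ha hb
    exact ⟨⟨ha.1, ha.2⟩, hb0, hb.1, hb.2⟩
  have hS₀card : S₀.card ≤ (2 * H + 1) * (2 * H) := by
    refine le_trans Finset.card_image_le ?_
    rw [Finset.card_product]
    have h1 : (Finset.Icc (-(H : ℤ)) (H : ℤ)).card = 2 * H + 1 := by
      rw [Int.card_Icc]
      omega
    have h2 : ((Finset.Icc (-(H : ℤ)) (H : ℤ)).erase 0).card = 2 * H := by
      rw [Finset.card_erase_of_mem (by rw [Finset.mem_Icc]; omega), h1]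
      omega
    rw [h1, h2]
  set S : Finset ℚ := S₀.filter (fun q => (q : K) ≠ c) with hSdef
  set rel : ℚ → ℚ → Prop :=
    fun q s => ‖(q : K) - (s : K)‖ < ‖(D : K)‖ * ‖(q : K) - c‖ with hreldef
  have hrad : ∀ q ∈ S, 0 < ‖(q : K) - c‖ := by
    intro q hq
    rw [hSdef, Finset.mem_filter] at hq
    exact norm_pos_iff.mpr (sub_ne_zero.mpr hq.2)
  have hrefl : ∀ q ∈ S, rel q q := by
    intro q hq
    show ‖(q : K) - (q : K)‖ < ‖(D : K)‖ * ‖(q : K) - c‖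
    simp only [sub_self, norm_zero]
    exact mul_pos hDpos (hrad q hq)
  have hsym : ∀ q ∈ S, ∀ s ∈ S, rel q s → rel s q := by
    intro q hq s hs h
    replace h : ‖(q : K) - (s : K)‖ < ‖(D : K)‖ * ‖(q : K) - c‖ := h
    show ‖(s : K) - (q : K)‖ < ‖(D : K)‖ * ‖(s : K) - c‖
    have h1 : ‖(q : K) - (s : K)‖ < ‖(q : K) - c‖ :=
      lt_of_lt_of_le h (mul_le_of_le_one_left (norm_nonneg _) hDle1)
    have heq : ‖(s : K) - c‖ = ‖(q : K) - c‖ := by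
      have le1 : ‖(s : K) - c‖ ≤ max ‖(s : K) - (q : K)‖ ‖(q : K) - c‖ := by
        have : (s : K) - c = ((s : K) - (q : K)) + ((q : K) - c) := by ring
        rw [this]; exact hna _ _
      have hsq : ‖(s : K) - (q : K)‖ = ‖(q : K) - (s : K)‖ := norm_sub_rev _ _
      have le1' : ‖(s : K) - c‖ ≤ ‖(q : K) - c‖ := by
        refine le_trans le1 ?_
        rw [hsq]
        exact max_le h1.le le_rfl
      have le2 : ‖(q : K) - c‖ ≤ max ‖(q : K) - (s : K)‖ ‖(s : K) - c‖ := by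
        have : (q : K) - c = ((q : K) - (s : K)) + ((s : K) - c) := by ring
        rw [this]; exact hna _ _
      rcases max_cases ‖(q : K) - (s : K)‖ ‖(s : K) - c‖ with ⟨hm, _⟩ | ⟨hm, _⟩
      · rw [hm] at le2; linarith
      · rw [hm] at le2; linarith
    rw [norm_sub_rev, heq]
    exact h
  obtain ⟨R, hRS, hcov, hsep⟩ := exists_greedy S rel hrefl hsym
  have hRS₀ : ∀ q ∈ R, q ∈ S := fun q hq => hRS hq
  refine ⟨R, ?_, ?_, ?_⟩
  · intro q hq
    exact hS₀1 q (Finset.mem_of_mem_filter q (hRS₀ q hq))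
  · -- cardinality bound
    set rad : ℚ → ℝ := fun s => ‖(s : K) - c‖ with hraddef
    have hRmem : ∀ x ∈ R, Ht x ∧ (x : K) ≠ c := by
      intro x hx
      have hxS := hRS₀ x hx
      rw [hSdef, Finset.mem_filter] at hxS
      exact ⟨hS₀1 x hxS.1, hxS.2⟩
    by_cases hcase : H ^ 2 < p
    · -- few rationals: trivial bound
      have hcard1 : R.card ≤ (2 * H + 1) * (2 * H) :=
        le_trans (Finset.card_le_card (hRS.trans (Finset.filter_subset _ _))) hS₀card
      have hppow : (p : ℝ) ^ 2 ≤ (p : ℝ) ^ (N + 1) :=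
        pow_le_pow_right₀ (le_of_lt hb1) (by omega)
      have hHp : ((H : ℝ) ^ 2 + 1) ≤ p := by exact_mod_cast (by omega : H ^ 2 + 1 ≤ p)
      have hM1 : (1 : ℝ) ≤ M := by exact_mod_cast hM
      have hH1 : (1 : ℝ) ≤ H := by exact_mod_cast hH
      have hpN0 : (0 : ℝ) < (p : ℝ) ^ (N + 1) := by positivity
      calc (R.card : ℝ) ≤ (((2 * H + 1) * (2 * H) : ℕ) : ℝ) := by exact_mod_cast hcard1
      _ ≤ 2 * (p : ℝ) ^ 2 := by push_cast; nlinarith [sq_nonneg ((H:ℝ) - 1), sq_nonneg ((H:ℝ)^2 - 1)]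
      _ ≤ 2 * (p : ℝ) ^ (N + 1) := by linarith
      _ ≤ 2 * M * (p : ℝ) ^ (N + 1) * (1 + 2 * t) := by
          have hM2t : (1 : ℝ) ≤ M * (1 + 2 * t) := by nlinarith
          calc 2 * (p : ℝ) ^ (N + 1) = 2 * (p : ℝ) ^ (N + 1) * 1 := by ring
          _ ≤ 2 * (p : ℝ) ^ (N + 1) * (M * (1 + 2 * t)) :=
              mul_le_mul_of_nonneg_left hM2t (by positivity)
          _ = 2 * M * (p : ℝ) ^ (N + 1) * (1 + 2 * t) := by ring
    · -- main case : p ≤ H^2, so 1 ≤ 2t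
      have hple : p ≤ H ^ 2 := not_lt.mp hcase
      have h2t1 : 1 ≤ 2 * t := by
        have h1 : Real.logb p (p : ℝ) ≤ Real.logb p ((H : ℝ) ^ 2) := by
          apply (Real.logb_le_logb hb1 (by positivity) (by positivity)).mpr
          exact_mod_cast hple
        rw [Real.logb_self_eq_one hb1, Real.logb_pow] at h1
        push_cast at h1
        linarith
      -- fiber bound
      have hfib : ∀ r₀ ∈ R.image rad, (R.filter (fun x => rad x = r₀)).card ≤ p ^ (N' + 1) := by
        intro r₀ hr₀
        set F := R.filter (fun x => rad x = r₀) with hFdef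
        have hFR : ∀ x ∈ F, x ∈ R := fun x hx => Finset.mem_of_mem_filter x hx
        have hFrad : ∀ x ∈ F, ‖(x : K) - c‖ = r₀ := by
          intro x hx; exact (Finset.mem_filter.mp hx).2
        have hup : ∀ x ∈ F, ∀ y ∈ F, ‖(x : K) - (y : K)‖ ≤ r₀ := by
          intro x hx y hy
          have h := ultra_sub hna ((x : K) - c) ((y : K) - c)
          have heq : ((x : K) - c) - ((y : K) - c) = (x : K) - y := by ring
          rw [heq, hFrad x hx, hFrad y hy] at h
          simpa using h
        have hlo : ∀ x ∈ F, ∀ y ∈ F, x ≠ y → π ^ N' * r₀ ≤ ‖(x : K) - (y : K)‖ := by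
          intro x hx y hy hxy
          have h := hsep x (hFR x hx) y (hFR y hy) hxy
          replace h : ¬ (‖(x : K) - (y : K)‖ < ‖(D : K)‖ * ‖(x : K) - c‖) := h
          rw [not_lt] at h
          rwa [hDnorm, hFrad x hx] at h
        rcases le_or_gt F.card 1 with hF1 | hF2
        · exact le_trans hF1 (Nat.one_le_pow _ _ hp.pos)
        set C : ℤ := ∏ s ∈ F, (s.den : ℤ) with hCdef
        have hC0 : C ≠ 0 := by
          have hprod : (∏ s ∈ F, (s.den : ℤ)) ≠ 0 := by
            apply Finset.prod_ne_zero_iff.mpr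
            intro s hs
            exact_mod_cast s.den_nz
          exact hprod
        have hCq : ((C : ℤ) : ℚ) ≠ 0 := by exact_mod_cast hC0
        set z : ℚ → ℤ := fun s => s.num * (C / (s.den : ℤ)) with hzdef
        have hzC : ∀ s ∈ F, ((z s : ℤ) : ℚ) = s * (C : ℚ) := by
          intro s hs
          obtain ⟨k, hk⟩ := Finset.dvd_prod_of_mem (fun s : ℚ => (s.den : ℤ)) hs
          rw [← hCdef] at hk
          have hden0 : ((s.den : ℤ)) ≠ 0 := by exact_mod_cast s.den_nz
          have hzk : z s = s.num * k := by
            show s.num * (C / (s.den : ℤ)) = s.num * k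
            rw [hk, Int.mul_ediv_cancel_left _ hden0]
          rw [hzk]
          push_cast
          rw [hk]
          push_cast
          rw [← mul_assoc, Rat.mul_den_eq_num]
        have hzinj : Set.InjOn z F := by
          intro x hx y hy hxy
          have h : (x : ℚ) * (C : ℚ) = y * (C : ℚ) := by
            rw [← hzC x hx, ← hzC y hy, hxy]
          exact mul_right_cancel₀ hCq h
        set vC : ℕ := padicValInt p C with hvCdef
        have hpair : ∀ x ∈ F, ∀ y ∈ F, x ≠ y →
            ‖(x : K) - (y : K)‖ = π ^ ((padicValInt p (z x - z y) : ℤ) - (vC : ℤ)) ∧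
              z x - z y ≠ 0 := by
          intro x hx y hy hxy
          have hz0 : z x - z y ≠ 0 := by
            intro h0
            exact hxy (hzinj hx hy (by omega))
          have hcast : ((z x - z y : ℤ) : ℚ) = (x - y) * (C : ℚ) := by
            push_cast
            rw [hzC x hx, hzC y hy]
            ring
          have hval : (padicValInt p (z x - z y) : ℤ) = padicValRat p (x - y) + (vC : ℤ) := by
            have h1 : padicValRat p ((z x - z y : ℤ) : ℚ) = (padicValInt p (z x - z y) : ℤ) :=
              padicValRat.of_int
            rw [hcast, padicValRat.mul (sub_ne_zero.mpr hxy) hCq, padicValRat.of_int] at h1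
            omega
          refine ⟨?_, hz0⟩
          rw [hnormdiff x y hxy]
          congr 1
          omega
        obtain ⟨x₀, hx₀, y₀, hy₀, hxy₀⟩ := Finset.one_lt_card.mp hF2
        set WS : Finset ℕ := ((F ×ˢ F).filter (fun ab => ab.1 ≠ ab.2)).image
          (fun ab => padicValInt p (z ab.1 - z ab.2)) with hWSdef
        have hWSne : WS.Nonempty := by
          refine ⟨padicValInt p (z x₀ - z y₀), Finset.mem_image.mpr ⟨(x₀, y₀), ?_, rfl⟩⟩
          rw [Finset.mem_filter, Finset.mem_product]
          exact ⟨⟨hx₀, hy₀⟩, hxy₀⟩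
        set W : ℕ := WS.min' hWSne with hWdef
        have hWle : ∀ x ∈ F, ∀ y ∈ F, x ≠ y → W ≤ padicValInt p (z x - z y) := by
          intro x hx y hy hxy
          apply WS.min'_le
          refine Finset.mem_image.mpr ⟨(x, y), ?_, rfl⟩
          rw [Finset.mem_filter, Finset.mem_product]
          exact ⟨⟨hx, hy⟩, hxy⟩
        obtain ⟨⟨u₀, v₀⟩, huv, hWeq⟩ := Finset.mem_image.mp (WS.min'_mem hWSne)
        rw [Finset.mem_filter, Finset.mem_product] at huv
        have hwin : ∀ x ∈ F, ∀ y ∈ F, x ≠ y → padicValInt p (z x - z y) ≤ W + N' := by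
          intro x hx y hy hxy
          obtain ⟨hnxy, hz0⟩ := hpair x hx y hy hxy
          obtain ⟨hnuv, hz0'⟩ := hpair u₀ huv.1.1 v₀ huv.1.2 huv.2
          have hr₀uv : ‖(u₀ : K) - (v₀ : K)‖ ≤ r₀ := hup u₀ huv.1.1 v₀ huv.1.2
          have hxyge : π ^ N' * r₀ ≤ ‖(x : K) - (y : K)‖ := hlo x hx y hy hxy
          have hchain : π ^ ((N' : ℤ) + ((W : ℤ) - (vC : ℤ))) ≤
              π ^ ((padicValInt p (z x - z y) : ℤ) - (vC : ℤ)) := by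
            rw [zpow_add₀ hπ0.ne']
            calc π ^ ((N' : ℤ)) * π ^ ((W : ℤ) - (vC : ℤ))
                = π ^ N' * ‖(u₀ : K) - (v₀ : K)‖ := by
                  rw [hnuv, hWeq, zpow_natCast]
            _ ≤ π ^ N' * r₀ := mul_le_mul_of_nonneg_left hr₀uv (by positivity)
            _ ≤ ‖(x : K) - (y : K)‖ := hxyge
            _ = π ^ ((padicValInt p (z x - z y) : ℤ) - (vC : ℤ)) := hnxy
          have := (zpow_le_zpow_iff_right_of_lt_one₀ hπ0 hπ1).mp hchain
          omega
        have hGhyp : ∀ a ∈ F.image z, ∀ b ∈ F.image z, a ≠ b →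
            ((p : ℤ) ^ W ∣ (a - b) ∧ ¬ (p : ℤ) ^ (W + (N' + 1)) ∣ (a - b)) := by
          intro a ha b hb hab
          obtain ⟨x, hx, rfl⟩ := Finset.mem_image.mp ha
          obtain ⟨y, hy, rfl⟩ := Finset.mem_image.mp hb
          have hxy : x ≠ y := by rintro rfl; exact hab rfl
          have hz0 : z x - z y ≠ 0 := (hpair x hx y hy hxy).2
          constructor
          · exact dvd_trans (pow_dvd_pow _ (hWle x hx y hy hxy)) (padicValInt_dvd _)
          · intro hdvd
            rcases (padicValInt_dvd_iff _ _).mp hdvd with h0 | hle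
            · exact hz0 h0
            · have := hwin x hx y hy hxy
              omega
        have hpig := int_pigeon hp (N' + 1) W (F.image z) hGhyp
        have hGcard : (F.image z).card = F.card := Finset.card_image_of_injOn hzinj
        omega
      have hstep2 : R.card ≤ p ^ (N' + 1) * (R.image rad).card :=
        Finset.card_le_mul_card_image R _ hfib
      rcases R.eq_empty_or_nonempty with rfl | hRne
      · simp only [Finset.card_empty, Nat.cast_zero]
        have h1t : (0:ℝ) ≤ 1 + 2 * t := by linarith
        positivity
      set T := R.image rad with hTdef
      have hTne : T.Nonempty := hRne.image rad
      have hTsub : T ⊆ insert (T.min' hTne)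
          ((Finset.Icc (⌈-t⌉) (⌊2 * t + 1⌋)).image (fun j : ℤ => π ^ j)) := by
        intro r' hr'
        rcases eq_or_ne r' (T.min' hTne) with rfl | hmin
        · exact Finset.mem_insert_self _ _
        apply Finset.mem_insert_of_mem
        obtain ⟨s', hs'R, hs'rad⟩ := Finset.mem_image.mp hr'
        obtain ⟨smin, hsminR, hsminrad⟩ := Finset.mem_image.mp (T.min'_mem hTne)
        have hlt : rad smin < rad s' := by
          rw [hsminrad, hs'rad]
          exact lt_of_le_of_ne (T.min'_le r' hr') (Ne.symm hmin)
        have hne' : s' ≠ smin := by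
          intro h
          rw [h] at hlt
          exact lt_irrefl _ hlt
        set j := padicValRat p (s' - smin) with hjdef
        have hKnorm : ‖(s' : K) - (smin : K)‖ = π ^ j := hnormdiff s' smin hne'
        have hradeq : ‖(s' : K) - (smin : K)‖ = r' := by
          have hub : ‖(s' : K) - (smin : K)‖ ≤ rad s' := by
            have h := ultra_sub hna ((s' : K) - c) ((smin : K) - c)
            have heq : ((s' : K) - c) - ((smin : K) - c) = (s' : K) - smin := by ring
            rw [heq] at h
            exact h.trans (max_le le_rfl hlt.le)
          have hlb : rad s' ≤ ‖(s' : K) - (smin : K)‖ := by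
            have h := hna ((s' : K) - (smin : K)) ((smin : K) - c)
            have heq : ((s' : K) - (smin : K)) + ((smin : K) - c) = (s' : K) - c := by ring
            rw [heq] at h
            rcases max_cases ‖(s' : K) - (smin : K)‖ ‖(smin : K) - c‖ with ⟨hm, _⟩ | ⟨hm, _⟩
            · rw [hm] at h; exact h
            · rw [hm] at h
              exfalso
              have : rad s' ≤ rad smin := h
              linarith
          rw [← hs'rad]
          exact le_antisymm hub hlb
        have hπj : π ^ j = r' := by rw [← hKnorm, hradeq]
        have hs'mem := hRmem s' hs'R
        have hsminmem := hRmem smin hsminR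
        have hjle : j ≤ ⌊2 * t + 1⌋ :=
          Int.le_floor.mpr (hval_diff s' smin hs'mem.1 hsminmem.1 hne')
        have hjge : ⌈-t⌉ ≤ j := by
          rw [Int.ceil_le]
          push_cast
          have hub2 : rad s' ≤ max ‖(s' : K)‖ 1 := by
            have h := ultra_sub hna ((s' : K)) c
            exact h.trans (max_le_max le_rfl hc)
          have hπjrad : π ^ j = rad s' := by rw [hπj, hs'rad]
          by_cases hs0 : s' = (0 : ℚ)
          · have hle1 : π ^ j ≤ 1 := by
              rw [hπjrad]
              refine hub2.trans ?_
              rw [hs0]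
              simp
            have h0j : (0 : ℤ) ≤ j := by
              have := (zpow_le_zpow_iff_right_of_lt_one₀ hπ0 hπ1).mp
                (by simpa using hle1 : π ^ j ≤ π ^ (0 : ℤ))
              exact this
            have : (0 : ℝ) ≤ (j : ℝ) := by exact_mod_cast h0j
            linarith
          · have hv' := hval_low s' hs'mem.1 hs0
            have hnorms' : ‖(s' : K)‖ = π ^ (padicValRat p s') := rat_norm_eq hna hp hpv s' hs0
            rcases le_total (padicValRat p s') 0 with hv0 | hv0
            · have hmax : max ‖(s' : K)‖ 1 = π ^ (padicValRat p s') := by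
                rw [hnorms', max_eq_left]
                have := (zpow_le_zpow_iff_right_of_lt_one₀ hπ0 hπ1).mpr hv0
                simpa using this
              have hjv : padicValRat p s' ≤ j := by
                apply (zpow_le_zpow_iff_right_of_lt_one₀ hπ0 hπ1).mp
                calc π ^ j = rad s' := hπjrad
                _ ≤ max ‖(s' : K)‖ 1 := hub2
                _ = π ^ (padicValRat p s') := hmax
              have : ((padicValRat p s' : ℤ) : ℝ) ≤ (j : ℝ) := by exact_mod_cast hjv
              linarith
            · have hmax : max ‖(s' : K)‖ 1 ≤ 1 := by
                rw [hnorms']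
                refine max_le ?_ le_rfl
                have := (zpow_le_zpow_iff_right_of_lt_one₀ hπ0 hπ1).mpr hv0
                simpa using this
              have h0j : (0 : ℤ) ≤ j := by
                apply (zpow_le_zpow_iff_right_of_lt_one₀ hπ0 hπ1).mp
                have hle1 : π ^ j ≤ 1 := by
                  rw [hπjrad]; exact hub2.trans hmax
                simpa using hle1
              have : (0 : ℝ) ≤ (j : ℝ) := by exact_mod_cast h0j
              linarith
        exact Finset.mem_image.mpr ⟨j, Finset.mem_Icc.mpr ⟨hjge, hjle⟩, hπj⟩
      have hTcard : (T.card : ℝ) ≤ 4 * t + 2 := by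
        have h1 : T.card ≤ 1 + (Finset.Icc (⌈-t⌉) (⌊2 * t + 1⌋)).card := by
          refine le_trans (Finset.card_le_card hTsub) ?_
          refine le_trans (Finset.card_insert_le _ _) ?_
          have := Finset.card_image_le (f := fun j : ℤ => π ^ j)
            (s := Finset.Icc (⌈-t⌉) (⌊2 * t + 1⌋))
          omega
        have hceil : ⌈-t⌉ = -⌊t⌋ := Int.ceil_neg
        have ha0 : 0 ≤ ⌊t⌋ := Int.le_floor.mpr (by simpa using ht0)
        have hb0 : 0 ≤ ⌊2 * t + 1⌋ := Int.le_floor.mpr (by push_cast; linarith)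
        have hcard2 : (Finset.Icc (⌈-t⌉) (⌊2 * t + 1⌋)).card = (⌊2 * t + 1⌋ + 1 + ⌊t⌋).toNat := by
          rw [Int.card_Icc, hceil]
          congr 1
          ring
        have h2 : ((Finset.Icc (⌈-t⌉) (⌊2 * t + 1⌋)).card : ℝ) =
            (⌊2 * t + 1⌋ : ℝ) + 1 + (⌊t⌋ : ℝ) := by
          rw [hcard2]
          rw [show (((⌊2 * t + 1⌋ + 1 + ⌊t⌋).toNat : ℕ) : ℝ) =
            (((⌊2 * t + 1⌋ + 1 + ⌊t⌋).toNat : ℤ) : ℝ) by push_cast; ring]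
          rw [Int.toNat_of_nonneg (by omega)]
          push_cast
          ring
        have hfb : (⌊2 * t + 1⌋ : ℝ) + (⌊t⌋ : ℝ) ≤ 4 * t := by
          rcases le_or_gt 1 t with ht1 | ht1
          · have hfl1 := Int.floor_le (2 * t + 1)
            have hfl2 := Int.floor_le t
            linarith
          · have hA : ⌊t⌋ = 0 := Int.floor_eq_zero_iff.mpr ⟨ht0, ht1⟩
            have hB : (⌊2 * t + 1⌋ : ℝ) ≤ 2 := by
              have h3 : ⌊2 * t + 1⌋ < 3 := Int.floor_lt.mpr (by push_cast; linarith)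
              exact_mod_cast (by omega : ⌊2 * t + 1⌋ ≤ 2)
            rw [hA]
            push_cast
            linarith
        have h1' : (T.card : ℝ) ≤ 1 + ((Finset.Icc (⌈-t⌉) (⌊2 * t + 1⌋)).card : ℝ) := by
          exact_mod_cast h1
        rw [h2] at h1'
        linarith
      have hpfac : p ^ (N' + 1) ≤ M * p ^ (N + 1) := by
        have h1 : p ^ μ ≤ M := by
          have h2 := Nat.ordProj_le p hM.ne'
          rwa [Nat.factorization_def M hp, ← hμdef] at h2
        calc p ^ (N' + 1) = p ^ μ * p ^ (N + 1) := by rw [hN'def]; ring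
        _ ≤ M * p ^ (N + 1) := Nat.mul_le_mul_right _ h1
      calc (R.card : ℝ) ≤ ((p ^ (N' + 1) * T.card : ℕ) : ℝ) := by exact_mod_cast hstep2
      _ = ((p ^ (N' + 1) : ℕ) : ℝ) * (T.card : ℝ) := by push_cast; ring
      _ ≤ ((M * p ^ (N + 1) : ℕ) : ℝ) * (4 * t + 2) := by
          apply mul_le_mul (by exact_mod_cast hpfac) hTcard (by positivity) (by positivity)
      _ = 2 * M * (p : ℝ) ^ (N + 1) * (1 + 2 * t) := by push_cast; ring
  · intro q hq hqc
    have hqS : q ∈ S := by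
      rw [hSdef, Finset.mem_filter]
      exact ⟨hS₀2 q hq, hqc⟩
    obtain ⟨s, hsR, hrel⟩ := hcov q hqS
    exact ⟨s, hsR, hrel⟩
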